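/- arXiv:1609.09216 — 13 statements merged into one kernel-verified Lean document; each statement's English description precedes it below -/
import Mathlib

section
/- Let A be a commutative ring and B ⊆ C two overrings of A (rings between A and its total quotient ring). If the extension A ⊆ C is flat, then the extension B ⊆ C is flat. -/
/-!
An overring `C` of `A` that is flat over `A` is an epimorphism of rings: writing `c = a / s` with
`s` a non-zero-divisor, `s` stays regular on the flat module `C ⊗[A] C`, and
`s • (c ⊗ 1) = a ⊗ 1 = 1 ⊗ a = s • (1 ⊗ c)`. For a flat epimorphism `A → C` and an intermediate
ring `B ⊆ C`, the multiplication map `B ⊗[A] C → C` factors as the injection `B ⊗[A] C → C ⊗[A] C`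
(flatness of `C`) followed by the bijection `C ⊗[A] C → C` (epimorphism), so `C ≅ B ⊗[A] C` is a
base change of a flat module.
-/

open TensorProduct

theorem Subalgebra.isEpi_of_flat {A K : Type*} [CommRing A] [CommRing K] [Algebra A K]
    {M : Submonoid A} [IsLocalization M K] (hM : M ≤ nonZeroDivisors A)
    (C : Subalgebra A K) [Module.Flat A C] : Algebra.IsEpi A C := by
  refine (Algebra.isEpi_iff_forall_one_tmul_eq A C).mpr fun c ↦ ?_
  obtain ⟨⟨a, s⟩, hs⟩ := IsLocalization.surj M (c : K)
  have hsc : (s : A) • c = algebraMap A C a := by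
    ext
    simpa [Algebra.smul_def, mul_comm] using hs
  apply Module.Flat.isSMulRegular_of_nonZeroDivisors (M := C ⊗[A] C) (hM s.2)
  change (s : A) • _ = (s : A) • _
  rw [← tmul_smul, smul_tmul', hsc, Algebra.algebraMap_eq_smul_one, smul_tmul]

theorem Module.Flat.of_isEpi_of_injective_algebraMap {A B C : Type*} [CommRing A] [CommRing B]
    [CommRing C] [Algebra A B] [Algebra A C] [Algebra B C] [IsScalarTower A B C]
    [Algebra.IsEpi A C] [Module.Flat A C] (hBC : Function.Injective (algebraMap B C)) :
    Module.Flat B C := by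
  let μ : B ⊗[A] C →ₗ[B] C := LinearMap.liftBaseChange B LinearMap.id
  have hμ : (μ : B ⊗[A] C → C) =
      lift (LinearMap.mul A C) ∘ LinearMap.rTensor C (IsScalarTower.toAlgHom A B C).toLinearMap := by
    ext x
    induction x with
    | zero => simp
    | tmul b c => simp [μ, Algebra.smul_def]
    | add x y hx hy => simp_all
  have hμ_inj : Function.Injective μ := by
    rw [hμ]
    exact Algebra.IsEpi.injective_lift_mul.comp
      (Module.Flat.rTensor_preserves_injective_linearMap _ hBC)
  have hμ_surj : Function.Surjective μ := fun c ↦ ⟨1 ⊗ₜ c, by simp [μ]⟩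
  exact Module.Flat.of_linearEquiv (LinearEquiv.ofBijective μ ⟨hμ_inj, hμ_surj⟩).symm

theorem statement0 (A : Type*) [CommRing A]
    (B C : Subalgebra A (Localization (nonZeroDivisors A))) (hBC : B ≤ C)
    [Module.Flat A C] :
    letI : Algebra B C := (Subalgebra.inclusion hBC).toRingHom.toAlgebra
    Module.Flat B C := by
  let : Algebra B C := (Subalgebra.inclusion hBC).toRingHom.toAlgebra
  have : IsScalarTower A B C := .of_algebraMap_eq' rfl
  have := C.isEpi_of_flat le_rfl
  exact Module.Flat.of_isEpi_of_injective_algebraMap (A := A) (Subalgebra.inclusion_injective hBC)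
end

section
/- If A ⊆ B is a flat ring extension that is also integral, and B is contained in the total quotient ring of A (i.e., B is an overring of A), then A = B. -/
/-!
Let `x = a / s ∈ B` and let `I = (A :_A x)` be its ideal of denominators. The relation
`s • x - a • 1 = 0` is trivial in the flat module `B` (equational criterion); since `s` is a
non-zero-divisor, the coefficients of `1` in the resulting factorisation lie in `I`, so `I B = B`.
For an integral extension this forces `I = A`, i.e. `x ∈ A`.
-/

open Submodule

section

variable {A B : Type*} [CommRing A] [CommRing B] [Algebra A B]

theorem Module.Flat.map_colon_one_eq_top [Module.Flat A B] {x : B} {s a : A}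
    (hs : IsSMulRegular B s) (hx : s • x = a • 1) :
    ((1 : Submodule A B).colon {x}).map (algebraMap A B) = ⊤ := by
  have hrel : ∑ i, ![s, -a] i • ![x, 1] i = 0 := by
    simp [Fin.sum_univ_two, hx]
  obtain ⟨k, c, y, hy, hc⟩ := Module.Flat.isTrivialRelation_of_sum_smul_eq_zero
    (R := A) (M := B) hrel
  have hmem : ∀ j, c 1 j ∈ (1 : Submodule A B).colon {x} := by
    intro j
    have hcj : s * c 0 j = a * c 1 j := by
      simpa [Fin.sum_univ_two, sub_eq_zero, neg_mul, ← sub_eq_add_neg] using hc j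
    refine mem_colon_singleton.mpr (mem_one.mpr ⟨c 0 j, hs ?_⟩)
    calc s • algebraMap A B (c 0 j) = (s * c 0 j) • (1 : B) := by
          rw [Algebra.algebraMap_eq_smul_one, smul_smul]
      _ = c 1 j • a • (1 : B) := by rw [hcj, mul_comm, smul_smul]
      _ = s • c 1 j • x := by rw [← hx, smul_comm]
  rw [Ideal.eq_top_iff_one, show (1 : B) = ∑ j, c 1 j • y j from hy 1]
  refine Ideal.sum_mem _ fun j _ => ?_
  rw [Algebra.smul_def]
  exact Ideal.mul_mem_right _ _ (Ideal.mem_map_of_mem _ (hmem j))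

theorem Algebra.mem_bot_of_flat_of_isIntegral [Module.Flat A B] [Algebra.IsIntegral A B]
    (hinj : Function.Injective (algebraMap A B)) {x : B} {s a : A}
    (hs : IsSMulRegular B s) (hx : s • x = a • 1) : x ∈ (⊥ : Subalgebra A B) := by
  have hI : (1 : Submodule A B).colon {x} = ⊤ :=
    (Ideal.map_eq_top_iff _ hinj (Algebra.IsIntegral.isIntegral (R := A) (A := B))).mp
      (Module.Flat.map_colon_one_eq_top hs hx)
  obtain ⟨d, hd⟩ := mem_one.mp (mem_colon_singleton.mp (hI ▸ Submodule.mem_top (x := (1 : A))))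
  exact Algebra.mem_bot.mpr ⟨d, by rw [hd, one_smul]⟩

end

theorem statement1 (A : Type*) [CommRing A]
    (B : Subalgebra A (Localization (nonZeroDivisors A)))
    [Module.Flat A B] [Algebra.IsIntegral A B] : B = ⊥ := by
  set K := Localization (nonZeroDivisors A)
  have hinj : Function.Injective (algebraMap A B) := fun a b h =>
    IsLocalization.injective K le_rfl (congrArg Subtype.val h)
  refine eq_bot_iff.mpr fun x hx => ?_
  obtain ⟨⟨a, s⟩, hxs⟩ := IsLocalization.surj (nonZeroDivisors A) x
  have hs : IsSMulRegular B (s : A) := fun y z h => Subtype.ext <|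
    (IsLocalization.map_units K s).mul_right_injective <| by
      simpa [Algebra.smul_def] using congrArg Subtype.val h
  have hrel : (s : A) • (⟨x, hx⟩ : B) = a • 1 := Subtype.ext <| by
    simpa [Algebra.smul_def, mul_comm] using hxs
  obtain ⟨c, hc⟩ := Algebra.mem_bot.mp (Algebra.mem_bot_of_flat_of_isIntegral hinj hs hrel)
  exact Algebra.mem_bot.mpr ⟨c, congrArg Subtype.val hc⟩
end

section
/- Let A be a perinormal ring and B a flat overring of A. Then B is perinormal. -/
/-!
A flat overring `B` of `A` is an epimorphism of rings (`B ⊗[A] B = B`), so every `B`-module that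
is flat over `A` is already flat over `B`. If `C ⊇ B` is a going-down extension of `B`, then `C` is
going-down over `A`, because flat extensions satisfy going down and going down composes; as `A` is
perinormal, `C` is flat over `A`, hence over `B`.
-/

/-- Going down for a ring homomorphism. -/
def GoingDown {R S : Type*} [CommRing R] [CommRing S] (f : R →+* S) : Prop :=
  ∀ (P₁ P₂ : Ideal R), P₁.IsPrime → P₂.IsPrime → P₁ ≤ P₂ →
    ∀ Q₂ : Ideal S, Q₂.IsPrime → Q₂.comap f = P₂ →
      ∃ Q₁ : Ideal S, Q₁.IsPrime ∧ Q₁ ≤ Q₂ ∧ Q₁.comap f = P₁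

/-- A ring is perinormal if every going-down overring is flat. -/
def Perinormal (A : Type*) [CommRing A] : Prop :=
  ∀ B : Subalgebra A (Localization (nonZeroDivisors A)),
    GoingDown (algebraMap A B) → Module.Flat A B

open TensorProduct

theorem goingDown_algebraMap_iff {R S : Type*} [CommRing R] [CommRing S] [Algebra R S] :
    GoingDown (algebraMap R S) ↔ Algebra.HasGoingDown R S := by
  refine ⟨fun h ↦ ⟨fun {p} _ Q _ hlt ↦ ?_⟩, fun _ P₁ P₂ _ _ hle Q₂ _ hQ₂ ↦ ?_⟩
  · obtain ⟨P, hP, hPQ, hPp⟩ := h p (Q.under R) ‹_› inferInstance hlt.le Q ‹_› rfl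
    exact ⟨P, hPQ, hP, ⟨hPp.symm⟩⟩
  · have : Q₂.LiesOver P₂ := ⟨hQ₂.symm⟩
    obtain ⟨P, hPQ, hP, hPp⟩ := Ideal.exists_ideal_le_liesOver_of_le Q₂ hle
    exact ⟨P, hP, hPQ, hPp.over.symm⟩

theorem Module.Flat.of_isEpi (R A M : Type*) [CommRing R] [CommRing A] [Algebra R A]
    [Algebra.IsEpi R A] [AddCommGroup M] [Module R M] [Module A M] [IsScalarTower R A M]
    [Module.Flat R M] : Module.Flat A M :=
  .of_linearEquiv (TensorProduct.lid' R A M).symm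

/-- Writing `b = a / s`, multiplication by `s` sends both `1 ⊗ b` and `b ⊗ 1` to `1 ⊗ a`, and it is
injective on `B ⊗[R] B` by flatness. -/
theorem Subalgebra.isEpi_of_isLocalization_of_flat {R L : Type*} [CommRing R] [CommRing L]
    [Algebra R L] (S : Submonoid R) [IsLocalization S L] (B : Subalgebra R L)
    [Module.Flat R B] : Algebra.IsEpi R B := by
  refine (Algebra.isEpi_iff_forall_one_tmul_eq R B).mpr fun b ↦ ?_
  obtain ⟨⟨a, s⟩, hs⟩ := IsLocalization.surj S (b : L)
  have hsb : s.1 • b = algebraMap R B a := Subtype.ext <| by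
    simpa [Algebra.smul_def, mul_comm] using hs
  have hinj : Function.Injective (LinearMap.lsmul R B s.1) := fun x y hxy ↦ Subtype.ext <|
    (IsLocalization.map_units L s).mul_right_injective <| by
      simpa [Algebra.smul_def] using congrArg Subtype.val hxy
  apply Module.Flat.lTensor_preserves_injective_linearMap _ hinj
  change (1 : B) ⊗ₜ[R] (s.1 • b) = b ⊗ₜ[R] (s.1 • 1)
  rw [hsb, ← smul_tmul s.1 b (1 : B), hsb, Algebra.algebraMap_eq_smul_one, smul_tmul]

theorem statement2 (A : Type*) [CommRing A] (hA : Perinormal A)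
    (B : Subalgebra A (Localization (nonZeroDivisors A))) [Module.Flat A B] :
    ∀ (C : Subalgebra A (Localization (nonZeroDivisors A))) (hBC : B ≤ C),
      GoingDown (Subalgebra.inclusion hBC).toRingHom →
        letI : Algebra B C := (Subalgebra.inclusion hBC).toRingHom.toAlgebra
        Module.Flat B C := by
  intro C hBC hBC_GD
  let : Algebra B C := (Subalgebra.inclusion hBC).toRingHom.toAlgebra
  have : IsScalarTower A B C := .of_algebraMap_eq fun _ ↦ rfl
  have : Algebra.HasGoingDown B C := goingDown_algebraMap_iff.mp hBC_GD
  have : Module.Flat A C := hA C <| goingDown_algebraMap_iff.mpr <| .trans A B C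
  have : Algebra.IsEpi A B := B.isEpi_of_isLocalization_of_flat (nonZeroDivisors A)
  exact .of_isEpi A B C
end

section
/- Let A ⊆ B be an integral unibranched ring extension (the contraction map Spec(B) → Spec(A) is bijective). Then the contraction map Spec(B) → Spec(A) is an isomorphism of partially ordered sets; in particular, the extension A ⊆ B satisfies going down. -/
theorem statement3 (A B : Type*) [CommRing A] [CommRing B] [Algebra A B]
    [Algebra.IsIntegral A B] (hinj : Function.Injective (algebraMap A B))
    (hbij : Function.Bijective (PrimeSpectrum.comap (algebraMap A B))) :
    (∀ Q₁ Q₂ : PrimeSpectrum B,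
      (Q₁.asIdeal.comap (algebraMap A B) ≤ Q₂.asIdeal.comap (algebraMap A B) ↔
        Q₁.asIdeal ≤ Q₂.asIdeal)) ∧
    GoingDown (algebraMap A B) := by
  have key : ∀ Q₁ Q₂ : PrimeSpectrum B,
      Q₁.asIdeal.comap (algebraMap A B) ≤ Q₂.asIdeal.comap (algebraMap A B) →
      Q₁.asIdeal ≤ Q₂.asIdeal := by
    intro Q₁ Q₂ hle
    have := Q₂.asIdeal.comap (algebraMap A B)
    haveI : (Q₂.asIdeal.comap (algebraMap A B)).IsPrime :=
      Ideal.IsPrime.comap _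
    obtain ⟨Q, hQ, hQp, hQc⟩ :=
      Ideal.exists_ideal_over_prime_of_isIntegral
        (Q₂.asIdeal.comap (algebraMap A B)) Q₁.asIdeal hle
    have : (⟨Q, hQp⟩ : PrimeSpectrum B) = Q₂ := by
      apply hbij.1
      apply PrimeSpectrum.ext
      simpa [PrimeSpectrum.comap_asIdeal] using hQc
    have hQ2 : Q = Q₂.asIdeal := congrArg PrimeSpectrum.asIdeal this
    exact hQ2 ▸ hQ
  refine ⟨fun Q₁ Q₂ => ⟨key Q₁ Q₂, fun h => Ideal.comap_mono h⟩, ?_⟩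
  intro P₁ P₂ hP₁ hP₂ hle Q₂ hQ₂ hQ₂c
  obtain ⟨Q₁, hQ₁⟩ := hbij.2 ⟨P₁, hP₁⟩
  refine ⟨Q₁.asIdeal, Q₁.isPrime, ?_, ?_⟩
  · exact key Q₁ ⟨Q₂, hQ₂⟩ (by
      have h1 : Q₁.asIdeal.comap (algebraMap A B) = P₁ :=
        congrArg PrimeSpectrum.asIdeal hQ₁
      rw [h1, hQ₂c]; exact hle)
  · exact congrArg PrimeSpectrum.asIdeal hQ₁
end

section
/- Let A be a perinormal ring and B an integral unibranched overring of A. Then A = B. -/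
/-- Going up from the unique prime over `P₁` reaches a prime over `P₂`, which must be `Q₂`. -/
theorem goingDown_of_isIntegral_of_bijective_comap {R S : Type*} [CommRing R] [CommRing S]
    [Algebra R S] [Algebra.IsIntegral R S]
    (h : Function.Bijective (PrimeSpectrum.comap (algebraMap R S))) :
    GoingDown (algebraMap R S) := by
  intro P₁ P₂ hP₁ _ hle Q₂ hQ₂ hQ₂P₂
  obtain ⟨Q₁, hQ₁⟩ := h.2 ⟨P₁, hP₁⟩
  have hQ₁P₁ : Q₁.asIdeal.comap (algebraMap R S) = P₁ := congrArg PrimeSpectrum.asIdeal hQ₁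
  obtain ⟨Q, hQ₁Q, hQ, hQP₂⟩ :=
    Ideal.exists_ideal_over_prime_of_isIntegral P₂ Q₁.asIdeal (hQ₁P₁ ▸ hle)
  obtain rfl : Q = Q₂ := congrArg PrimeSpectrum.asIdeal <|
    @h.1 ⟨Q, hQ⟩ ⟨Q₂, hQ₂⟩ (PrimeSpectrum.ext (hQP₂.trans hQ₂P₂.symm))
  exact ⟨Q₁.asIdeal, Q₁.isPrime, hQ₁Q, hQ₁P₁⟩

/-- If `x = a / s` lies in `B`, then `a ∈ sB ∩ A = sA` by faithful flatness, so `x ∈ A`. -/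
theorem Subalgebra.eq_bot_of_faithfullyFlat {A K : Type*} [CommRing A] [CommRing K] [Algebra A K]
    (M : Submonoid A) [IsLocalization M K] (B : Subalgebra A K) [Module.FaithfullyFlat A B] :
    B = ⊥ := by
  refine eq_bot_iff.2 fun x hx => ?_
  obtain ⟨a, s, rfl⟩ := IsLocalization.exists_mk'_eq M x
  have ha : algebraMap A B a ∈ (Ideal.span {(s : A)}).map (algebraMap A B) := by
    rw [Ideal.map_span, Set.image_singleton, Ideal.mem_span_singleton']
    exact ⟨⟨_, hx⟩, Subtype.ext (IsLocalization.mk'_spec K a s)⟩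
  rw [← Ideal.mem_comap, Ideal.comap_map_eq_self_of_faithfullyFlat,
    Ideal.mem_span_singleton'] at ha
  obtain ⟨t, rfl⟩ := ha
  exact ⟨t, by simp [IsLocalization.mk'_mul_cancel_right]⟩

theorem statement4 (A : Type*) [CommRing A] (hA : Perinormal A)
    (B : Subalgebra A (Localization (nonZeroDivisors A))) [Algebra.IsIntegral A B]
    (hbij : Function.Bijective (PrimeSpectrum.comap (algebraMap A B))) :
    B = ⊥ := by
  have : Module.Flat A B := hA B (goingDown_of_isIntegral_of_bijective_comap hbij)
  have : Module.FaithfullyFlat A B := .of_comap_surjective hbij.2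
  exact B.eq_bot_of_faithfullyFlat (nonZeroDivisors A)
end

section
/- Let A ⊆ C be a ring extension and B any commutative ring. Then A ⊆ C satisfies going down if and only if A × B ⊆ C × B (componentwise inclusion) satisfies going down. -/
/-!
Every prime of `R × S` is `p × S` or `R × q`, and a prime contained in `I × S` with `I ≠ R` is of
the first kind. So below a prime of the form `P × S` (or `R × P`) every prime has the same form,
and going down for `f × g` splits into going down for `f` and for `g`, one factor at a time.
-/

namespace Ideal

variable {R S : Type*} [CommRing R] [CommRing S]

lemma comap_prodMap_prod {R' S' : Type*} [CommRing R'] [CommRing S'] (f : R →+* R')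
    (g : S →+* S') (I : Ideal R') (J : Ideal S') :
    (I.prod J).comap (f.prodMap g) = (I.comap f).prod (J.comap g) := by
  ext
  simp [mem_prod]

lemma prod_le_prod_iff {I I' : Ideal R} {J J' : Ideal S} :
    I.prod J ≤ I'.prod J' ↔ I ≤ I' ∧ J ≤ J' :=
  ⟨fun h ↦ ⟨by simpa only [map_fst_prod] using map_mono (f := RingHom.fst R S) h,
    by simpa only [map_snd_prod] using map_mono (f := RingHom.snd R S) h⟩,
    fun h ↦ prod_mono h.1 h.2⟩

lemma exists_isPrime_eq_prod_top_of_le {P : Ideal (R × S)} [P.IsPrime] {I : Ideal R}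
    (hI : I ≠ ⊤) (hle : P ≤ I.prod ⊤) :
    ∃ p : Ideal R, p.IsPrime ∧ p ≤ I ∧ P = p.prod ⊤ := by
  rcases (ideal_prod_prime P).mp ‹_› with ⟨p, hp, rfl⟩ | ⟨q, -, rfl⟩
  · exact ⟨p, hp, (prod_le_prod_iff.mp hle).1, rfl⟩
  · exact (hI (top_le_iff.mp (prod_le_prod_iff.mp hle).1)).elim

lemma exists_isPrime_eq_top_prod_of_le {P : Ideal (R × S)} [P.IsPrime] {J : Ideal S}
    (hJ : J ≠ ⊤) (hle : P ≤ (⊤ : Ideal R).prod J) :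
    ∃ q : Ideal S, q.IsPrime ∧ q ≤ J ∧ P = (⊤ : Ideal R).prod q := by
  rcases (ideal_prod_prime P).mp ‹_› with ⟨p, -, rfl⟩ | ⟨q, hq, rfl⟩
  · exact (hJ (top_le_iff.mp (prod_le_prod_iff.mp hle).2)).elim
  · exact ⟨q, hq, (prod_le_prod_iff.mp hle).2, rfl⟩

end Ideal

open Ideal

section

variable {R S R' S' : Type*} [CommRing R] [CommRing S] [CommRing R'] [CommRing S']
  {f : R →+* S} {g : R' →+* S'}

lemma GoingDown.prodMap (hf : GoingDown f) (hg : GoingDown g) : GoingDown (f.prodMap g) := by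
  intro P₁ P₂ _ _ hle Q₂ hQ₂ hcom
  rcases (ideal_prod_prime Q₂).mp hQ₂ with ⟨q, hq, rfl⟩ | ⟨q, hq, rfl⟩
  · rw [comap_prodMap_prod, comap_top] at hcom
    subst hcom
    obtain ⟨p, hp, hpq, rfl⟩ := exists_isPrime_eq_prod_top_of_le (comap_isPrime f q).ne_top hle
    obtain ⟨q₁, hq₁, hq₁q, hq₁p⟩ := hf p _ hp (comap_isPrime f q) hpq q hq rfl
    refine ⟨q₁.prod ⊤, isPrime_ideal_prod_top, prod_mono_left hq₁q, ?_⟩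
    rw [comap_prodMap_prod, hq₁p, comap_top]
  · rw [comap_prodMap_prod, comap_top] at hcom
    subst hcom
    obtain ⟨p, hp, hpq, rfl⟩ := exists_isPrime_eq_top_prod_of_le (comap_isPrime g q).ne_top hle
    obtain ⟨q₁, hq₁, hq₁q, hq₁p⟩ := hg p _ hp (comap_isPrime g q) hpq q hq rfl
    refine ⟨(⊤ : Ideal S).prod q₁, isPrime_ideal_prod_top', prod_mono_right hq₁q, ?_⟩
    rw [comap_prodMap_prod, hq₁p, comap_top]

lemma GoingDown.of_prodMap_left (h : GoingDown (f.prodMap g)) : GoingDown f := by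
  intro p₁ p₂ hp₁ hp₂ hle q₂ hq₂ hcom
  obtain ⟨Q₁, hQ₁, hQ₁q, hQ₁p⟩ := h (p₁.prod ⊤) (p₂.prod ⊤) isPrime_ideal_prod_top
    isPrime_ideal_prod_top (prod_mono_left hle) (q₂.prod ⊤) isPrime_ideal_prod_top
    (by rw [comap_prodMap_prod, hcom, comap_top])
  obtain ⟨q₁, hq₁, hq₁q, rfl⟩ := exists_isPrime_eq_prod_top_of_le hq₂.ne_top hQ₁q
  rw [comap_prodMap_prod, comap_top] at hQ₁p
  exact ⟨q₁, hq₁, hq₁q, (prod_inj.mp hQ₁p).1⟩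

end

lemma goingDown_id (R : Type*) [CommRing R] : GoingDown (RingHom.id R) :=
  fun P₁ _ hP₁ _ hle _ _ hQ₂ ↦ ⟨P₁, hP₁, by rwa [← hQ₂, comap_id] at hle, comap_id P₁⟩

theorem statement6_general (A C B : Type*) [CommRing A] [CommRing C] [CommRing B] [Algebra A C] :
    GoingDown (algebraMap A C) ↔ GoingDown ((algebraMap A C).prodMap (RingHom.id B)) :=
  ⟨fun h ↦ h.prodMap (goingDown_id B), GoingDown.of_prodMap_left⟩

theorem statement6 (A C B : Type*) [CommRing A] [CommRing C] [CommRing B] [Algebra A C]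
    (hinj : Function.Injective (algebraMap A C)) :
    GoingDown (algebraMap A C) ↔ GoingDown ((algebraMap A C).prodMap (RingHom.id B)) :=
  statement6_general A C B
end

section
/- Let A be a commutative ring with total quotient ring K. Then A equals the intersection of the localizations A_(P) := A localized at the multiplicative set (A \ P) ∩ Reg(A), where P ranges over the weakly Bourbaki associated primes of the A-module K/A (viewed as subrings of K). -/
/-- A Marot ring: regular ideals are generated by their regular elements. -/
def IsMarot (A : Type*) [CommRing A] : Prop :=
  ∀ I : Ideal A, (∃ r ∈ I, r ∈ nonZeroDivisors A) →
    I = Ideal.span {r : A | r ∈ I ∧ r ∈ nonZeroDivisors A}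

/-- The underlying set of the regular quotient ring. -/
def rqSet {R K : Type*} [CommRing R] [CommRing K] (f : R →+* K) (P : Ideal R) : Set K :=
  {x | ∃ a s : R, s ∈ nonZeroDivisors R ∧ s ∉ P ∧ x * f s = f a}

/-- The weakly Bourbaki associated primes of K/A. -/
def WBAssoc (A : Type*) [CommRing A] : Set (Ideal A) :=
  {P | ∃ a b : A, b ∈ nonZeroDivisors A ∧
    P ∈ ((Ideal.span {b}).colon (Ideal.span {a})).minimalPrimes}

theorem statement8 (A : Type*) [CommRing A] (hM : IsMarot A)
    (x : Localization (nonZeroDivisors A)) :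
    x ∈ (algebraMap A (Localization (nonZeroDivisors A))).range ↔
      ∀ P ∈ WBAssoc A, x ∈ rqSet (algebraMap A (Localization (nonZeroDivisors A))) P := by
  set f := algebraMap A (Localization (nonZeroDivisors A)) with hf
  constructor
  · rintro ⟨r, rfl⟩ P ⟨a, b, hb, hP⟩
    exact ⟨r, 1, one_mem _, fun h => hP.1.1.ne_top (Ideal.eq_top_of_isUnit_mem _ h isUnit_one),
      by simp⟩
  · intro H
    -- write x = a / b
    obtain ⟨⟨a, b⟩, hab⟩ := IsLocalization.surj (nonZeroDivisors A) x
    simp only at hab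
    -- consider the ideal I = (bA : a)
    set I : Ideal A := (Ideal.span {(b : A)}).colon (Ideal.span {a}) with hI
    have hIT : I = ⊤ := by
      by_contra hne
      obtain ⟨M, hM', hIM⟩ := Ideal.exists_le_maximal I hne
      obtain ⟨P, hPmin, _⟩ := Ideal.exists_minimalPrimes_le (J := M) hIM
      obtain ⟨c, s, hs, hsP, hcs⟩ := H P ⟨a, b, b.2, hPmin⟩
      -- x * f s = f c, and x * f b = f a, so f (a * s) = f (c * b)
      have hinj : Function.Injective f := IsLocalization.injective _ (le_refl _)
      have h1 : f (a * s) = f (c * b) := by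
        have : x * f b * f s = f a * f s := by rw [hab]
        rw [mul_right_comm, hcs] at this
        rw [map_mul, map_mul, ← this]
      have h2 : a * s = c * b := hinj h1
      have : s ∈ I := by
        rw [hI, Ideal.mem_colon_span_singleton, Ideal.mem_span_singleton]
        exact ⟨c, by rw [mul_comm s a, h2, mul_comm]⟩
      exact hsP (hPmin.1.2 this)
    -- 1 ∈ I, so a ∈ bA
    have h1 : (1 : A) ∈ I := hIT ▸ Submodule.mem_top
    rw [hI, Ideal.mem_colon_span_singleton, one_mul, Ideal.mem_span_singleton] at h1
    obtain ⟨c, hc⟩ := h1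
    refine ⟨c, ?_⟩
    have hbu : IsUnit (f b) := IsLocalization.map_units _ b
    have : f c * f b = x * f b := by
      rw [hab, ← map_mul, mul_comm c b, ← hc]
    exact hbu.mul_right_cancel this
end

section
/- Let A be a Marot ring, a ∈ A, b a non-zero-divisor of A, and P a prime ideal of A. Then a/b ∈ A_(P) (the localization of A at the multiplicative set (A \ P) ∩ Reg(A), viewed inside the total quotient ring) if and only if the ideal (bA : a) is not contained in P. -/
theorem statement9 (A : Type*) [CommRing A] (hM : IsMarot A)
    (a b : A) (hb : b ∈ nonZeroDivisors A) (P : Ideal A) (hP : P.IsPrime)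
    (x : Localization (nonZeroDivisors A))
    (hx : x * algebraMap A (Localization (nonZeroDivisors A)) b = algebraMap A (Localization (nonZeroDivisors A)) a) :
    x ∈ rqSet (algebraMap A (Localization (nonZeroDivisors A))) P ↔
      ¬ ((Ideal.span {b}).colon (Ideal.span {a}) ≤ P) := by
  set f := algebraMap A (Localization (nonZeroDivisors A)) with hf
  have hinj : Function.Injective f := IsFractionRing.injective A _
  constructor
  · rintro ⟨t, s, hs, hsP, hxs⟩ hle
    apply hsP
    apply hle
    rw [Ideal.mem_colon_span_singleton, Ideal.mem_span_singleton]
    have : f (s * a) = f (t * b) := by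
      rw [map_mul, map_mul, ← hx, ← hxs]; ring
    exact ⟨t, by have := hinj this; linear_combination this⟩
  · intro hne
    set I := (Ideal.span {b}).colon (Ideal.span {a}) with hI
    have hbI : b ∈ I := by
      rw [Ideal.mem_colon_span_singleton, Ideal.mem_span_singleton]
      exact Dvd.intro a rfl
    have heq := hM I ⟨b, hbI, hb⟩
    have hex : ∃ s, s ∈ I ∧ s ∈ nonZeroDivisors A ∧ s ∉ P := by
      by_contra h
      push_neg at h
      apply hne
      rw [heq]
      rw [Ideal.span_le]
      rintro r ⟨hrI, hr⟩
      exact h r hrI hr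
    obtain ⟨s, hsI, hs, hsP⟩ := hex
    rw [hI, Ideal.mem_colon_span_singleton, Ideal.mem_span_singleton] at hsI
    obtain ⟨t, ht⟩ := hsI
    refine ⟨t, s, hs, hsP, ?_⟩
    have hu : IsUnit (f b) := IsLocalization.map_units _ (⟨b, hb⟩ : nonZeroDivisors A)
    apply hu.mul_left_cancel
    calc f b * (x * f s) = (x * f b) * f s := by ring
      _ = f a * f s := by rw [hx]
      _ = f (s * a) := by rw [map_mul]; ring
      _ = f b * f t := by rw [ht, map_mul]
end

section
/- Let A be a Marot ring with total quotient ring K, S ⊆ Reg(A) a multiplicative set, and suppose A is a P-ring. Then the localization A_S is a P-ring. -/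
/-- The regular quotient ring at a prime, as a subring of K. -/
def rqSub {R K : Type*} [CommRing R] [CommRing K] (f : R →+* K) (P : Ideal R)
    (hP : P.IsPrime) : Subring K where
  carrier := rqSet f P
  one_mem' := ⟨1, 1, Submonoid.one_mem _, fun h => hP.ne_top (P.eq_top_iff_one.mpr h), by simp⟩
  zero_mem' := ⟨0, 1, Submonoid.one_mem _, fun h => hP.ne_top (P.eq_top_iff_one.mpr h), by simp⟩
  mul_mem' := by
    rintro x y ⟨a, s, hs, hsP, hx⟩ ⟨b, t, ht, htP, hy⟩
    refine ⟨a * b, s * t, mul_mem hs ht, fun h => ((hP.mem_or_mem h).elim hsP htP), ?_⟩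
    rw [map_mul, map_mul]
    calc x * y * (f s * f t) = (x * f s) * (y * f t) := by ring
    _ = f a * f b := by rw [hx, hy]
  add_mem' := by
    rintro x y ⟨a, s, hs, hsP, hx⟩ ⟨b, t, ht, htP, hy⟩
    refine ⟨a * t + b * s, s * t, mul_mem hs ht, fun h => ((hP.mem_or_mem h).elim hsP htP), ?_⟩
    rw [map_mul, map_add, map_mul, map_mul]
    calc (x + y) * (f s * f t) = (x * f s) * f t + (y * f t) * f s := by ring
    _ = f a * f t + f b * f s := by rw [hx, hy]
  neg_mem' := by
    rintro x ⟨a, s, hs, hsP, hx⟩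
    exact ⟨-a, s, hs, hsP, by rw [map_neg, neg_mul, hx]⟩

/-- The canonical map into the regular quotient ring. -/
def toRq {R K : Type*} [CommRing R] [CommRing K] (f : R →+* K) (P : Ideal R)
    (hP : P.IsPrime) : R →+* rqSub f P hP :=
  f.codRestrict _ fun r =>
    ⟨r, 1, Submonoid.one_mem _, fun h => hP.ne_top (P.eq_top_iff_one.mpr h), by simp⟩

/-- A Manis valuation pair of K. -/
def IsManisPair {K : Type*} [CommRing K] (V : Subring K) (M : Ideal V) : Prop :=
  M.IsPrime ∧ ∀ x : K, x ∉ V → ∃ y ∈ M, ∃ z : V, (z : K) = x * (y : K) ∧ z ∉ M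

/-- A regular prime P is valued if (A_(P), P·A_(P)) is a Manis valuation pair. -/
def IsValuedPrime (A : Type*) [CommRing A] (P : Ideal A) : Prop :=
  ∃ hP : P.IsPrime,
    IsManisPair (rqSub (algebraMap A (Localization (nonZeroDivisors A))) P hP)
      (P.map (toRq (algebraMap A (Localization (nonZeroDivisors A))) P hP))

/-- A P-ring: every weakly Bourbaki associated prime of K/A is valued. -/
def PRing (A : Type*) [CommRing A] : Prop :=
  ∀ P ∈ WBAssoc A, IsValuedPrime A P

/-!
Because `S` consists of regular elements, `A_S` has the same total quotient ring `K` as `A`.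
If `Q` is minimal over `(b'A_S : a')`, write `a' = a/u`, `b' = b/v`; then `(b'A_S : a')` is the
extension of `(bA : a)`, so `P = Q ∩ A` is minimal over `(bA : a)` and hence valued. Inside `K`
the regular quotient ring `(A_S)_(Q)` is exactly `A_(P)`, and `Q = P A_S` makes the two maximal
ideals agree, so the Manis pair of `P` is the one of `Q`.
-/

theorem IsManisPair.map_ringEquiv {K K' : Type*} [CommRing K] [CommRing K'] (φ : K ≃+* K')
    {V : Subring K} {W : Subring K'} (e : V ≃+* W) (he : ∀ v, (e v : K') = φ v)
    {M : Ideal V} (h : IsManisPair V M) : IsManisPair W (M.map (e : V →+* W)) := by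
  obtain ⟨hM, hman⟩ := h
  refine ⟨Ideal.map_isPrime_of_equiv e, fun x hx => ?_⟩
  have hxV : φ.symm x ∉ V := fun hmem => hx <| by
    simpa [he] using (e ⟨_, hmem⟩).2
  obtain ⟨y, hyM, z, hz, hzM⟩ := hman _ hxV
  refine ⟨e y, Ideal.mem_map_of_mem e hyM, e z, by simp [he, hz], ?_⟩
  change e z ∉ M.map e
  rw [Ideal.mem_map_of_equiv]
  rintro ⟨z', hz'M, hz'⟩
  exact hzM (e.injective hz' ▸ hz'M)

section RegularQuotientRing

variable {R K K' : Type*} [CommRing R] [CommRing K] [CommRing K']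

theorem rqSet_ringEquiv_comp (φ : K ≃+* K') (f : R →+* K) (P : Ideal R) :
    rqSet (φ.toRingHom.comp f) P = φ '' rqSet f P := by
  ext x
  constructor
  · rintro ⟨a, s, hs, hsP, hx⟩
    exact ⟨φ.symm x, ⟨a, s, hs, hsP, φ.injective (by simpa using hx)⟩, φ.apply_symm_apply x⟩
  · rintro ⟨y, ⟨a, s, hs, hsP, hy⟩, rfl⟩
    exact ⟨a, s, hs, hsP, by simp [← map_mul, hy]⟩

variable {R' : Type*} [CommRing R']

theorem isManisPair_rqSub_of_comp (g : R →+* R') (f : R →+* K) (f' : R' →+* K')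
    (φ : K ≃+* K') (hφ : φ.toRingHom.comp f = f'.comp g)
    {P : Ideal R} (hP : P.IsPrime) {Q : Ideal R'} (hQ : Q.IsPrime) (hQP : Q = P.map g)
    (hset : rqSet f' Q = rqSet (f'.comp g) P)
    (h : IsManisPair (rqSub f P hP) (P.map (toRq f P hP))) :
    IsManisPair (rqSub f' Q hQ) (Q.map (toRq f' Q hQ)) := by
  have hW : (rqSub f P hP).map φ.toRingHom = rqSub f' Q hQ := SetLike.coe_injective <| by
    change φ '' rqSet f P = rqSet f' Q
    rw [hset, ← hφ, rqSet_ringEquiv_comp]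
  let e := RingEquiv.trans φ.subringMap (RingEquiv.subringCongr hW)
  convert h.map_ringEquiv φ e fun _ => rfl using 1
  refine (congrArg (Ideal.map _) hQP).trans ?_
  rw [Ideal.map_map, Ideal.map_map]
  congr 1
  ext t
  exact (RingHom.congr_fun hφ t).symm

end RegularQuotientRing

theorem isPrime_of_mem_wbAssoc {A : Type*} [CommRing A] {P : Ideal A} (hP : P ∈ WBAssoc A) :
    P.IsPrime := by
  obtain ⟨a, b, -, hmin⟩ := hP
  exact hmin.1.1

theorem map_colon_span_singleton {A R' : Type*} [CommRing A] [CommRing R'] [Algebra A R']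
    (S : Submonoid A) [IsLocalization S R'] (a b : A) :
    ((Ideal.span {b}).colon (Ideal.span {a})).map (algebraMap A R')
      = (Ideal.span {algebraMap A R' b}).colon (Ideal.span {algebraMap A R' a}) := by
  apply le_antisymm
  · rw [Ideal.map_le_iff_le_comap]
    intro y hy
    rw [Ideal.mem_colon_span_singleton] at hy
    obtain ⟨c, hc⟩ := Ideal.mem_span_singleton.mp hy
    rw [Ideal.mem_comap, Ideal.mem_colon_span_singleton, ← map_mul, hc]
    exact Ideal.mem_span_singleton.mpr ⟨algebraMap A R' c, map_mul _ _ _⟩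
  · intro x hx
    rw [Ideal.mem_colon_span_singleton] at hx
    obtain ⟨q, hq⟩ := Ideal.mem_span_singleton.mp hx
    obtain ⟨⟨y, s⟩, hys⟩ := IsLocalization.surj S x
    obtain ⟨⟨c, t⟩, hct⟩ := IsLocalization.surj S q
    have key : algebraMap A R' (a * y * t) = algebraMap A R' (b * c * s) := by
      simp only [map_mul]
      rw [← hys, ← hct]
      linear_combination algebraMap A R' (s : A) * algebraMap A R' (t : A) * hq
    obtain ⟨u, hu⟩ := (IsLocalization.eq_iff_exists S R').mp key
    have hz : (u : A) * t * y ∈ (Ideal.span {b}).colon (Ideal.span {a}) := by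
      rw [Ideal.mem_colon_span_singleton]
      exact Ideal.mem_span_singleton.mpr ⟨(u : A) * c * s, by linear_combination hu⟩
    refine (IsLocalization.mem_map_algebraMap_iff S R').mpr ⟨⟨⟨_, hz⟩, u * t * s⟩, ?_⟩
    simp only [Submonoid.coe_mul, map_mul]
    linear_combination algebraMap A R' (u : A) * algebraMap A R' (t : A) * hys

section Localization

variable {A : Type*} [CommRing A] {S : Submonoid A} {R' : Type*} [CommRing R'] [Algebra A R']
  [IsLocalization S R']

theorem mem_nonZeroDivisors_of_mul_algebraMap_eq (hS : S ≤ nonZeroDivisors A)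
    {x : R'} (hx : x ∈ nonZeroDivisors R') {c : A} {w : S}
    (h : x * algebraMap A R' w = algebraMap A R' c) : c ∈ nonZeroDivisors A :=
  mem_nonZeroDivisors_of_injective (IsLocalization.injective R' hS)
    (h ▸ mul_mem hx (IsLocalization.map_units R' w).mem_nonZeroDivisors)

theorem comap_mem_wbAssoc (hS : S ≤ nonZeroDivisors A) {Q : Ideal R'} (hQ : Q ∈ WBAssoc R') :
    Q.comap (algebraMap A R') ∈ WBAssoc A := by
  obtain ⟨a', b', hb', hmin⟩ := hQ
  obtain ⟨⟨a, u⟩, hau⟩ := IsLocalization.surj S a'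
  obtain ⟨⟨b, v⟩, hbv⟩ := IsLocalization.surj S b'
  have hspan : ∀ {x : R'} {c : A} {w : S}, x * algebraMap A R' w = algebraMap A R' c →
      Ideal.span {x} = Ideal.span {algebraMap A R' c} := fun h =>
    h ▸ (Ideal.span_singleton_mul_right_unit (IsLocalization.map_units R' _) _).symm
  rw [hspan hau, hspan hbv, ← map_colon_span_singleton S,
    IsLocalization.minimalPrimes_map S] at hmin
  exact ⟨a, b, mem_nonZeroDivisors_of_mul_algebraMap_eq hS hb' hbv, hmin⟩

theorem rqSet_comp_algebraMap (hS : S ≤ nonZeroDivisors A) {K' : Type*} [CommRing K']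
    (f' : R' →+* K') {Q : Ideal R'} (hQ : Q.IsPrime) :
    rqSet (f'.comp (algebraMap A R')) (Q.comap (algebraMap A R')) = rqSet f' Q := by
  ext x
  constructor
  · rintro ⟨a, s, hs, hsP, hx⟩
    exact ⟨_, _, IsLocalization.map_nonZeroDivisors_le S R' ⟨s, hs, rfl⟩, hsP, hx⟩
  · rintro ⟨a', s', hs', hs'Q, hx⟩
    obtain ⟨⟨c, w⟩, hcw⟩ := IsLocalization.surj S s'
    obtain ⟨⟨d, e⟩, hde⟩ := IsLocalization.surj S a'
    have hunit : ∀ t : S, algebraMap A R' t ∉ Q := fun t ht =>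
      hQ.ne_top (Q.eq_top_of_isUnit_mem ht (IsLocalization.map_units R' t))
    have hcQ : algebraMap A R' c ∉ Q := by
      rw [← hcw]
      exact hQ.mul_notMem hs'Q (hunit w)
    refine ⟨d * w, c * e, mul_mem (mem_nonZeroDivisors_of_mul_algebraMap_eq hS hs' hcw) (hS e.2),
      by simpa using hQ.mul_notMem hcQ (hunit e), ?_⟩
    simp only [RingHom.comp_apply, map_mul, ← hcw, ← hde]
    linear_combination f' (algebraMap A R' w) * f' (algebraMap A R' e) * hx

theorem IsValuedPrime.of_comap (hS : S ≤ nonZeroDivisors A) {Q : Ideal R'} (hQ : Q.IsPrime)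
    (h : IsValuedPrime A (Q.comap (algebraMap A R'))) : IsValuedPrime R' Q := by
  obtain ⟨hP, hman⟩ := h
  let K := Localization (nonZeroDivisors A)
  let _ : Algebra R' K :=
    IsLocalization.localizationAlgebraOfSubmonoidLe R' K S (nonZeroDivisors A) hS
  have := IsLocalization.localization_isScalarTower_of_submonoid_le R' K S _ hS
  have := IsFractionRing.isFractionRing_of_isLocalization S R' K hS
  let φ := IsLocalization.algEquiv (nonZeroDivisors R') K (Localization (nonZeroDivisors R'))
  refine ⟨hQ, isManisPair_rqSub_of_comp (algebraMap A R') _ _ φ.toRingEquiv ?_ hP hQ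
    (IsLocalization.map_under S R' Q).symm (rqSet_comp_algebraMap hS _ hQ).symm hman⟩
  ext t
  change φ (algebraMap A K t) = _
  rw [IsScalarTower.algebraMap_apply A R' K, φ.commutes]
  rfl

end Localization

theorem statement10_general (A : Type*) [CommRing A] (hA : PRing A)
    (S : Submonoid A) (hS : (S : Set A) ⊆ nonZeroDivisors A) :
    PRing (Localization S) := fun _ hQ =>
  (hA _ (comap_mem_wbAssoc hS hQ)).of_comap hS (isPrime_of_mem_wbAssoc hQ)

theorem statement10 (A : Type*) [CommRing A] (hM : IsMarot A) (hA : PRing A)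
    (S : Submonoid A) (hS : (S : Set A) ⊆ nonZeroDivisors A) :
    PRing (Localization S) :=
  statement10_general A hA S hS
end

section
/- Every P-ring is an essential ring: if A is a Marot ring such that A_(P) is a Manis valuation ring of the total quotient ring K for every prime P minimal over an ideal (bA : a) with a ∈ A and b regular, then A is an intersection of rings A_(P) over a family of valued primes P. -/
/-- An essential ring: an intersection of regular quotient rings at valued primes. -/
def Essential (A : Type*) [CommRing A] : Prop :=
  ∃ G : Set (Ideal A), (∀ P ∈ G, IsValuedPrime A P) ∧
    ∀ x : Localization (nonZeroDivisors A),
      x ∈ (algebraMap A (Localization (nonZeroDivisors A))).range ↔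
        ∀ P ∈ G, x ∈ rqSet (algebraMap A (Localization (nonZeroDivisors A))) P

theorem statement11 (A : Type*) [CommRing A] (hM : IsMarot A) (hA : PRing A) :
    Essential A := by
  classical
  refine ⟨WBAssoc A, hA, fun x => ?_⟩
  set f := algebraMap A (Localization (nonZeroDivisors A)) with hf
  have hinj : Function.Injective f := IsLocalization.injective _ le_rfl
  constructor
  · rintro ⟨r, rfl⟩ P hP
    obtain ⟨a, b, hb, hmin⟩ := hP
    have hprime : P.IsPrime := hmin.1.1
    exact ⟨r, 1, one_mem _, fun h => hprime.ne_top (P.eq_top_iff_one.mpr h), by simp⟩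
  · intro h
    obtain ⟨⟨a, b⟩, hx⟩ := IsLocalization.surj (nonZeroDivisors A) x
    by_contra hxr
    set I := (Ideal.span {(b : A)}).colon (Ideal.span {a}) with hI
    have hItop : I ≠ ⊤ := by
      intro htop
      have h1 : (1 : A) ∈ I := htop ▸ Submodule.mem_top
      rw [hI, Ideal.mem_colon_span_singleton, one_mul, Ideal.mem_span_singleton] at h1
      obtain ⟨c, hc⟩ := h1
      apply hxr
      refine ⟨c, ?_⟩
      have hu : IsUnit (f b) := IsLocalization.map_units _ b
      apply hu.mul_left_cancel
      rw [mul_comm (f b) x, hx, hc, map_mul, mul_comm]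
    obtain ⟨M, hMmax, hIM⟩ := Ideal.exists_le_maximal I hItop
    have := hMmax.isPrime
    obtain ⟨P, hP, _⟩ := Ideal.exists_minimalPrimes_le hIM
    have hPW : P ∈ WBAssoc A := ⟨a, b, b.2, hP⟩
    obtain ⟨c, s, hs, hsP, hcs⟩ := h P hPW
    have hsI : s ∈ I := by
      rw [hI, Ideal.mem_colon_span_singleton, Ideal.mem_span_singleton]
      refine ⟨c, hinj ?_⟩
      have : x * f s * f b = f c * f b := by rw [hcs]
      rw [mul_right_comm, hx] at this
      calc f (s * a) = f a * f s := by rw [map_mul]; ring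
      _ = f c * f b := this
      _ = f (b * c) := by rw [map_mul]; ring
    exact hsP (hP.1.2 hsI)
end

section
/- Let A be a Marot ring, B a GD-overring of A, Q a prime ideal of B, and P = Q ∩ A. Then the contraction map Spec(B_(Q)) → Spec(A_(P)) is surjective. -/
section RegularQuotient

variable {R K : Type*} [CommRing R] [CommRing K] (f : R →+* K)

theorem map_mem_rqSub (P : Ideal R) (hP : P.IsPrime) (a : R) : f a ∈ rqSub f P hP :=
  ⟨a, 1, one_mem _, fun h => hP.ne_top (P.eq_top_of_isUnit_mem h isUnit_one), by simp⟩

def toRqSub (P : Ideal R) (hP : P.IsPrime) : R →+* rqSub f P hP :=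
  f.codRestrict _ (map_mem_rqSub f P hP)

theorem isLocalization_rqSub (hf : Function.Injective f)
    (hunit : ∀ s ∈ nonZeroDivisors R, IsUnit (f s)) (P : Ideal R) [hP : P.IsPrime] :
    letI := (toRqSub f P hP).toAlgebra
    IsLocalization (nonZeroDivisors R ⊓ P.primeCompl) (rqSub f P hP) := by
  let := (toRqSub f P hP).toAlgebra
  refine (isLocalization_iff _ _).mpr ⟨?_, ?_, ?_⟩
  · rintro ⟨s, hs, hsP⟩
    have hinv : ↑(hunit s hs).unit⁻¹ ∈ rqSub f P hP :=
      ⟨1, s, hs, hsP, (hunit s hs).val_inv_mul.trans (map_one f).symm⟩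
    exact isUnit_iff_exists_inv.mpr ⟨⟨_, hinv⟩, Subtype.ext (hunit s hs).mul_val_inv⟩
  · rintro ⟨z, a, s, hs, hsP, h⟩
    exact ⟨(a, ⟨s, hs, hsP⟩), Subtype.ext h⟩
  · intro x y h
    exact ⟨1, congrArg _ (hf (congrArg Subtype.val h))⟩

theorem rqSub_comap_le {S : Type*} [CommRing S] (φ : R →+* S) (g : S →+* K)
    (hφ : g.comp φ = f) (hreg : nonZeroDivisors R ≤ (nonZeroDivisors S).comap φ)
    (Q : Ideal S) (hQ : Q.IsPrime) :
    rqSub f (Q.comap φ) (hQ.comap φ) ≤ rqSub g Q hQ := by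
  rintro x ⟨a, s, hs, hsQ, hx⟩
  refine ⟨φ a, φ s, hreg hs, hsQ, ?_⟩
  simpa only [← RingHom.comp_apply, hφ] using hx

end RegularQuotient

theorem disjoint_inf_primeCompl_iff {R : Type*} [CommRing R] (M : Submonoid R) (P : Ideal R)
    [P.IsPrime] (I : Ideal R) :
    Disjoint ((M ⊓ P.primeCompl : Submonoid R) : Set R) I ↔ ∀ r ∈ I, r ∈ M → r ∈ P := by
  simp only [Set.disjoint_left, Submonoid.coe_inf, Set.mem_inter_iff, SetLike.mem_coe]
  constructor
  · intro h r hrI hrM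
    by_contra hrP
    exact h ⟨hrM, hrP⟩ hrI
  · rintro h r ⟨hrM, hrP⟩ hrI
    exact hrP (h r hrI hrM)

theorem PrimeSpectrum.comap_surjective_of_isLocalization {R S Rₘ Sₙ : Type*} [CommRing R]
    [CommRing S] [CommRing Rₘ] [CommRing Sₙ] [Algebra R Rₘ] [Algebra S Sₙ]
    (M : Submonoid R) (N : Submonoid S) [IsLocalization M Rₘ] [IsLocalization N Sₙ]
    (f : R →+* S) (φ : Rₘ →+* Sₙ) (hφ : φ.comp (algebraMap R Rₘ) = (algebraMap S Sₙ).comp f)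
    (h : ∀ p : Ideal R, p.IsPrime → Disjoint (M : Set R) p →
      ∃ q : Ideal S, q.IsPrime ∧ Disjoint (N : Set S) q ∧ q.comap f = p) :
    Function.Surjective (PrimeSpectrum.comap φ) := by
  intro 𝔭
  obtain ⟨hp, hpM⟩ := (IsLocalization.isPrime_iff_isPrime_disjoint M Rₘ 𝔭.asIdeal).mp 𝔭.isPrime
  obtain ⟨q, hq, hqN, hqp⟩ := h _ hp hpM
  refine ⟨⟨q.map (algebraMap S Sₙ), IsLocalization.isPrime_of_isPrime_disjoint N Sₙ q hq hqN⟩, ?_⟩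
  ext1
  rw [PrimeSpectrum.comap_asIdeal, ← IsLocalization.map_under M Rₘ 𝔭.asIdeal,
    ← IsLocalization.map_under M Rₘ (Ideal.comap φ _)]
  congr 1
  rw [Ideal.under, Ideal.comap_comap, hφ, ← Ideal.comap_comap, ← hqp]
  exact congrArg (Ideal.comap f) (IsLocalization.under_map_of_isPrime_disjoint N Sₙ hq hqN)

theorem IsMarot.le_of_forall_mem {A : Type*} [CommRing A] (hM : IsMarot A) {I J : Ideal A}
    (hI : ∃ r ∈ I, r ∈ nonZeroDivisors A) (hIJ : ∀ r ∈ I, r ∈ nonZeroDivisors A → r ∈ J) :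
    I ≤ J := by
  rw [hM I hI, Ideal.span_le]
  exact fun r hr => hIJ r hr.1 hr.2

namespace Subalgebra

variable {A K : Type*} [CommRing A] [CommRing K] [Algebra A K] [IsFractionRing A K]
  (B : Subalgebra A K)

theorem algebraMap_mem_nonZeroDivisors {s : A} (hs : s ∈ nonZeroDivisors A) :
    algebraMap A B s ∈ nonZeroDivisors B := by
  refine mem_nonZeroDivisors_iff_right.mpr fun b hb => Subtype.ext ?_
  have hsK : IsUnit (algebraMap A K s) := IsLocalization.map_units K ⟨s, hs⟩
  exact hsK.mul_left_eq_zero.mp (congrArg Subtype.val hb)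

theorem isUnit_of_mem_nonZeroDivisors {t : B} (ht : t ∈ nonZeroDivisors B) : IsUnit (t : K) := by
  obtain ⟨⟨a, s⟩, hts⟩ := IsLocalization.surj (nonZeroDivisors A) (t : K)
  have hsK : IsUnit (algebraMap A K s) := IsLocalization.map_units K s
  suffices ha : a ∈ nonZeroDivisors A from
    isUnit_of_mul_isUnit_left (hts ▸ IsLocalization.map_units K ⟨a, ha⟩)
  refine mem_nonZeroDivisors_iff_right.mpr fun b hb => IsFractionRing.injective A K ?_
  have hbt : algebraMap A B b * t = 0 := by
    apply Subtype.ext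
    apply hsK.mul_left_eq_zero.mp
    change algebraMap A K b * t * algebraMap A K s = 0
    rw [mul_assoc, hts, ← map_mul, hb, map_zero]
  rw [map_zero]
  exact congrArg Subtype.val (mem_nonZeroDivisors_iff_right.mp ht _ hbt)

theorem exists_isPrime_comap_eq_of_disjoint_nonZeroDivisors (p : Ideal A) [hp : p.IsPrime]
    (hpA : Disjoint (nonZeroDivisors A : Set A) p) :
    ∃ q : Ideal B, q.IsPrime ∧ Disjoint (nonZeroDivisors B : Set B) q ∧
      q.comap (algebraMap A B) = p := by
  have hpK := IsLocalization.isPrime_of_isPrime_disjoint _ K p hp hpA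
  refine ⟨(p.map (algebraMap A K)).comap B.val, hpK.comap _, ?_, ?_⟩
  · refine Set.disjoint_left.mpr fun t ht htq => hpK.ne_top ?_
    exact Ideal.eq_top_of_isUnit_mem _ htq (B.isUnit_of_mem_nonZeroDivisors ht)
  · exact IsLocalization.under_map_of_isPrime_disjoint _ K hp hpA

end Subalgebra

theorem exists_isPrime_comap_eq_of_goingDown {A K : Type*} [CommRing A] [CommRing K] [Algebra A K]
    [IsFractionRing A K] (hM : IsMarot A) (B : Subalgebra A K) (hGD : GoingDown (algebraMap A B))
    (Q : Ideal B) [hQ : Q.IsPrime] (p : Ideal A) [hp : p.IsPrime]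
    (hpQ : ∀ r ∈ p, r ∈ nonZeroDivisors A → r ∈ Q.comap (algebraMap A B)) :
    ∃ q : Ideal B, q.IsPrime ∧ q.comap (algebraMap A B) = p ∧
      ∀ t ∈ q, t ∈ nonZeroDivisors B → t ∈ Q := by
  by_cases hreg : ∃ r ∈ p, r ∈ nonZeroDivisors A
  · obtain ⟨q, hq, hqQ, hqp⟩ :=
      hGD p _ hp (hQ.comap _) (hM.le_of_forall_mem hreg hpQ) Q hQ rfl
    exact ⟨q, hq, hqp, fun t ht _ => hqQ ht⟩
  · have hpA : Disjoint (nonZeroDivisors A : Set A) p :=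
      Set.disjoint_right.mpr fun r hr hrA => hreg ⟨r, hr, hrA⟩
    obtain ⟨q, hq, hqB, hqp⟩ := B.exists_isPrime_comap_eq_of_disjoint_nonZeroDivisors p hpA
    exact ⟨q, hq, hqp, fun t ht htB => (Set.disjoint_left.mp hqB htB ht).elim⟩

theorem statement12 (A : Type*) [CommRing A] (hM : IsMarot A)
    (B : Subalgebra A (Localization (nonZeroDivisors A)))
    (hGD : GoingDown (algebraMap A B))
    (Q : Ideal B) (hQ : Q.IsPrime) :
    ∃ hle : rqSub (algebraMap A (Localization (nonZeroDivisors A))) (Q.comap (algebraMap A B))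
        (hQ.comap (algebraMap A B)) ≤ rqSub B.toSubring.subtype Q hQ,
      Function.Surjective (PrimeSpectrum.comap (Subring.inclusion hle)) := by
  set K := Localization (nonZeroDivisors A)
  have := hQ
  let P := Q.comap (algebraMap A B)
  refine ⟨rqSub_comap_le (algebraMap A K) (algebraMap A B) B.toSubring.subtype rfl
    (fun _ => B.algebraMap_mem_nonZeroDivisors) Q hQ, ?_⟩
  let := (toRqSub (algebraMap A K) P (hQ.comap _)).toAlgebra
  let := (toRqSub B.toSubring.subtype Q hQ).toAlgebra
  have := isLocalization_rqSub (algebraMap A K) (IsFractionRing.injective A K)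
    (fun s hs => IsLocalization.map_units K ⟨s, hs⟩) P
  have := isLocalization_rqSub B.toSubring.subtype Subtype.val_injective
    (fun _ => B.isUnit_of_mem_nonZeroDivisors) Q
  refine PrimeSpectrum.comap_surjective_of_isLocalization (nonZeroDivisors A ⊓ P.primeCompl)
    (nonZeroDivisors B ⊓ Q.primeCompl) (algebraMap A B) _ rfl ?_
  intro p hp hpP
  obtain ⟨q, hq, hqp, hqQ⟩ := exists_isPrime_comap_eq_of_goingDown hM B hGD Q p
    ((disjoint_inf_primeCompl_iff _ P p).mp hpP)
  exact ⟨q, hq, (disjoint_inf_primeCompl_iff _ Q q).mpr hqQ, hqp⟩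
end

section
/- Let A be an essential Marot ring and B an overring of A such that the contraction map Spec(B) → Spec(A) is surjective. Then A = B. -/
/-!
Let `x ∈ B` and let `P` be one of the valued primes cutting out `A`. If `x ∉ A_(P)`, the Manis
property of `(A_(P), P A_(P))` produces `a ∈ P` with `x a ∈ A \ P`. A prime `Q` of `B` lying over
`P` contains `a`, hence `x a`, so `x a ∈ Q ∩ A = P`, a contradiction. Thus `x` lies in every
`A_(P)`, i.e. in `A`.
-/

section RegularQuotient

variable {R K : Type*} [CommRing R] [CommRing K] {f : R →+* K} {P : Ideal R} {hP : P.IsPrime}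

lemma exists_mul_eq_of_mem_map_toRq {y : rqSub f P hP} (hy : y ∈ P.map (toRq f P hP)) :
    ∃ s p : R, s ∈ nonZeroDivisors R ∧ s ∉ P ∧ p ∈ P ∧ (y : K) * f s = f p := by
  have hone : (1 : R) ∉ P := fun h => hP.ne_top (P.eq_top_iff_one.mpr h)
  refine Submodule.span_induction ?_ ?_ ?_ ?_ hy
  · rintro w ⟨p, hp, rfl⟩
    exact ⟨1, p, one_mem _, hone, hp, by rw [map_one, mul_one]; rfl⟩
  · exact ⟨1, 0, one_mem _, hone, P.zero_mem, by simp⟩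
  · rintro a b _ _ ⟨s, p, hs, hsP, hp, ha⟩ ⟨t, q, ht, htP, hq, hb⟩
    refine ⟨s * t, p * t + q * s, mul_mem hs ht, fun h => (hP.mem_or_mem h).elim hsP htP,
      P.add_mem (P.mul_mem_right _ hp) (P.mul_mem_right _ hq), ?_⟩
    simp only [Subring.coe_add, map_mul, map_add]
    linear_combination f t * ha + f s * hb
  · rintro v b _ ⟨s, p, hs, hsP, hp, hb⟩
    obtain ⟨a, t, ht, htP, hv⟩ := v.2
    refine ⟨t * s, a * p, mul_mem ht hs, fun h => (hP.mem_or_mem h).elim htP hsP,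
      P.mul_mem_left _ hp, ?_⟩
    simp only [smul_eq_mul, Subring.coe_mul, map_mul]
    linear_combination (v : K) * f t * hb + f p * hv

lemma toRq_mem_map_toRq_iff (hf : Function.Injective f) {a : R} :
    toRq f P hP a ∈ P.map (toRq f P hP) ↔ a ∈ P := by
  refine ⟨fun ha => ?_, Ideal.mem_map_of_mem _⟩
  obtain ⟨s, p, -, hsP, hp, hs⟩ := exists_mul_eq_of_mem_map_toRq ha
  have has : a * s = p := hf (by rw [map_mul]; exact hs)
  exact (hP.mem_or_mem (has ▸ hp)).resolve_right hsP

lemma exists_mul_eq_of_notMem_rqSet (hf : Function.Injective f)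
    (hManis : IsManisPair (rqSub f P hP) (P.map (toRq f P hP))) {x : K} (hx : x ∉ rqSet f P) :
    ∃ a ∈ P, ∃ b ∉ P, x * f a = f b := by
  obtain ⟨hMprime, hcrit⟩ := hManis
  obtain ⟨y, hyM, z, hzx, hzM⟩ := hcrit x hx
  obtain ⟨c, t, -, htP, hzc⟩ := z.2
  obtain ⟨s, p, -, hsP, hp, hys⟩ := exists_mul_eq_of_mem_map_toRq hyM
  have hcP : c ∉ P := by
    intro hc
    have hzt : z * toRq f P hP t ∈ P.map (toRq f P hP) := by
      rw [show z * toRq f P hP t = toRq f P hP c from Subtype.ext hzc]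
      exact Ideal.mem_map_of_mem _ hc
    exact hzM ((hMprime.mem_or_mem hzt).resolve_right ((toRq_mem_map_toRq_iff hf).not.2 htP))
  refine ⟨p * t, P.mul_mem_right t hp, c * s, fun h => (hP.mem_or_mem h).elim hcP hsP, ?_⟩
  rw [map_mul, map_mul]
  linear_combination (-(x * f t)) * hys + f s * hzc - f s * f t * hzx

lemma mem_rqSet_of_comap_eq [Algebra R K] (hf : Function.Injective (algebraMap R K))
    (hManis : IsManisPair (rqSub (algebraMap R K) P hP) (P.map (toRq (algebraMap R K) P hP)))
    {B : Subalgebra R K} {Q : Ideal B} (hQ : Q.comap (algebraMap R B) = P) {x : K}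
    (hx : x ∈ B) : x ∈ rqSet (algebraMap R K) P := by
  by_contra hxP
  obtain ⟨a, ha, b, hb, hab⟩ := exists_mul_eq_of_notMem_rqSet hf hManis hxP
  have hxab : (⟨x, hx⟩ : B) * algebraMap R B a = algebraMap R B b := Subtype.ext hab
  have haQ : algebraMap R B a ∈ Q := by rw [← Ideal.mem_comap, hQ]; exact ha
  apply hb
  rw [← hQ, Ideal.mem_comap, ← hxab]
  exact Q.mul_mem_left _ haQ

end RegularQuotient

theorem statement13_general (A : Type*) [CommRing A] (hE : Essential A)
    (B : Subalgebra A (Localization (nonZeroDivisors A)))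
    (hsurj : Function.Surjective (PrimeSpectrum.comap (algebraMap A B))) :
    B = ⊥ := by
  obtain ⟨G, hG, hInt⟩ := hE
  refine eq_bot_iff.2 fun x hx => (hInt x).2 fun P hPG => ?_
  obtain ⟨hP, hManis⟩ := hG P hPG
  obtain ⟨Q, hQ⟩ := hsurj ⟨P, hP⟩
  exact mem_rqSet_of_comap_eq (IsLocalization.injective _ le_rfl) hManis
    (congrArg PrimeSpectrum.asIdeal hQ) hx

theorem statement13 (A : Type*) [CommRing A] (hM : IsMarot A) (hE : Essential A)
    (B : Subalgebra A (Localization (nonZeroDivisors A)))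
    (hsurj : Function.Surjective (PrimeSpectrum.comap (algebraMap A B))) :
    B = ⊥ :=
  statement13_general A hE B hsurj
end

section
/- Let A ⊆ B be a ring extension where B is an overring of A (contained in the total quotient ring K of A). Then contraction induces a bijection between the non-regular prime ideals of B and the non-regular prime ideals of A, with inverse P ↦ PK ∩ B. -/
/-!
A regular element of `A` becomes a unit in `K`, hence a non-zero-divisor of `B`; so a non-regular
prime `Q` of `B` meets no regular element of `A`, and `b ∈ Q ↔ b s ∈ Q ∩ A` for a denominator `s`
of `b` gives `(Q ∩ A) K ∩ B = Q`. Conversely a non-regular prime `P` of `A` extends to the prime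
`P K` of the localization, and `P K ∩ B` contracts to `P`; it is non-regular because if `x s = p`
with `s` regular and `z p = 0`, `z ≠ 0`, then `z x = 0` after cancelling the unit `s` in `K`.
-/

namespace Subalgebra

variable {A K : Type*} [CommRing A] [CommRing K] [Algebra A K]

theorem algebraMap_mem_nonZeroDivisors_of_isUnit (B : Subalgebra A K) {s : A}
    (hs : IsUnit (algebraMap A K s)) : algebraMap A B s ∈ nonZeroDivisors B :=
  mem_nonZeroDivisors_of_injective (f := B.val) Subtype.val_injective hs.mem_nonZeroDivisors

theorem comap_map_comap_algebraMap_eq_of_isPrime (M : Submonoid A) [IsLocalization M K]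
    (B : Subalgebra A K) {Q : Ideal B} (hQ : Q.IsPrime) (hM : ∀ s ∈ M, algebraMap A B s ∉ Q) :
    Ideal.comap B.toSubring.subtype
      (Ideal.map (algebraMap A K) (Q.comap (algebraMap A B))) = Q := by
  ext b
  rw [Ideal.mem_comap, IsLocalization.mem_map_algebraMap_iff M K]
  constructor
  · rintro ⟨⟨⟨a, ha⟩, s⟩, hbs⟩
    have hbsQ : b * algebraMap A B s ∈ Q := by
      rw [show b * algebraMap A B s = algebraMap A B a from Subtype.ext hbs]
      exact ha
    exact (hQ.mem_or_mem hbsQ).resolve_right (hM s s.2)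
  · intro hb
    obtain ⟨⟨a, s⟩, hbs⟩ := IsLocalization.surj M (b : K)
    have haQ : algebraMap A B a ∈ Q := by
      rw [show algebraMap A B a = b * algebraMap A B s from Subtype.ext hbs.symm]
      exact Q.mul_mem_right _ hb
    exact ⟨⟨⟨a, haQ⟩, s⟩, hbs⟩

theorem notMem_nonZeroDivisors_of_mem_comap_map [IsFractionRing A K] (B : Subalgebra A K)
    {P : Ideal A} (hP : ∀ a ∈ P, a ∉ nonZeroDivisors A) {x : B}
    (hx : x ∈ Ideal.comap B.toSubring.subtype (Ideal.map (algebraMap A K) P)) :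
    x ∉ nonZeroDivisors B := by
  rw [Ideal.mem_comap, IsLocalization.mem_map_algebraMap_iff (nonZeroDivisors A) K] at hx
  obtain ⟨⟨⟨p, hp⟩, s⟩, hxs⟩ := hx
  replace hxs : (x : K) * algebraMap A K s = algebraMap A K p := hxs
  obtain ⟨z, hzp, hz⟩ : ∃ z, z * p = 0 ∧ z ≠ 0 := by
    simpa [mem_nonZeroDivisors_iff_right] using hP p hp
  have hzx : algebraMap A B z * x = 0 := by
    apply Subtype.ext
    apply (IsLocalization.map_units K s).mul_left_cancel
    calc algebraMap A K s * (algebraMap A K z * x)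
        = algebraMap A K (z * p) := by rw [map_mul, ← hxs]; ring
      _ = algebraMap A K s * ((0 : B) : K) := by
        rw [hzp, map_zero, ZeroMemClass.coe_zero, mul_zero]
  intro hxB
  have hz0 : algebraMap A K z = 0 := congrArg Subtype.val (hxB.2 _ hzx)
  exact hz (IsFractionRing.injective A K (hz0.trans (map_zero _).symm))

end Subalgebra

theorem statement17 (A : Type*) [CommRing A]
    (B : Subalgebra A (Localization (nonZeroDivisors A))) :
    (∀ Q : Ideal B, Q.IsPrime → (∀ x ∈ Q, x ∉ nonZeroDivisors B) →
      (∀ x ∈ Q.comap (algebraMap A B), x ∉ nonZeroDivisors A) ∧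
      Ideal.comap B.toSubring.subtype
        (Ideal.map (algebraMap A (Localization (nonZeroDivisors A))) (Q.comap (algebraMap A B))) = Q) ∧
    (∀ P : Ideal A, P.IsPrime → (∀ x ∈ P, x ∉ nonZeroDivisors A) →
      ∃ Q : Ideal B, Q.IsPrime ∧ (∀ x ∈ Q, x ∉ nonZeroDivisors B) ∧
        Q.comap (algebraMap A B) = P ∧
        Q = Ideal.comap B.toSubring.subtype (Ideal.map (algebraMap A (Localization (nonZeroDivisors A))) P)) := by
  refine ⟨fun Q hQ hQreg => ?_, fun P hP hPreg => ?_⟩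
  · have hM : ∀ s ∈ nonZeroDivisors A, algebraMap A B s ∉ Q := fun s hs hsQ =>
      hQreg _ hsQ (B.algebraMap_mem_nonZeroDivisors_of_isUnit (IsLocalization.map_units _ ⟨s, hs⟩))
    exact ⟨fun a ha haA => hM a haA ha, B.comap_map_comap_algebraMap_eq_of_isPrime _ hQ hM⟩
  · have hd : Disjoint (nonZeroDivisors A : Set A) P :=
      Set.disjoint_left.mpr fun a haA haP => hPreg a haP haA
    refine ⟨_, (IsLocalization.isPrime_of_isPrime_disjoint _ _ P hP hd).comap _,
      fun x hx => B.notMem_nonZeroDivisors_of_mem_comap_map hPreg hx, ?_, rfl⟩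
    rw [Ideal.comap_comap]
    exact IsLocalization.under_map_of_isPrime_disjoint _ _ hP hd
end
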